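/- arXiv:2501.04291 — 7 statements merged into one kernel-verified Lean document; each statement's English description precedes it below -/
import Mathlib

section
/- Let f₁, f₂ : ℝⁿ → ℝ be convex functions and f = f₁ − f₂. A point x* ∈ ℝⁿ is a global minimizer of f (i.e., f(x*) ≤ f(x) for all x ∈ ℝⁿ) if and only if for every ε ≥ 0 one has ∂_ε f₂(x*) ⊆ ∂_ε f₁(x*). -/
/-!
Necessity is immediate: if `x*` minimizes `f₁ - f₂`, then `f₁ - f₁ x*` dominates `f₂ - f₂ x*`,
so every affine minorant defining `∂_ε f₂(x*)` also works for `f₁`. For sufficiency, fix `y` and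
`δ > 0` and take an affine minorant `ℓ` of the convex function `f₂` with `ℓ y = f₂ y - δ`.
Its slope lies in `∂_ε f₂(x*)` for `ε = f₂ x* - ℓ x* ≥ 0`, hence in `∂_ε f₁(x*)`, and evaluating
that inequality at `y` gives `f x* ≤ f y + δ`.
-/

open scoped RealInnerProductSpace

/-- The ε-subdifferential of `g` at `x`. -/
def epsSubdiff {n : ℕ} (g : EuclideanSpace ℝ (Fin n) → ℝ) (ε : ℝ)
    (x : EuclideanSpace ℝ (Fin n)) : Set (EuclideanSpace ℝ (Fin n)) :=
  {ξ | ∀ y, g y ≥ g x + ⟪ξ, y - x⟫ - ε}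

/-- The subdifferential of `g` at `x`. -/
def subdiff {n : ℕ} (g : EuclideanSpace ℝ (Fin n) → ℝ)
    (x : EuclideanSpace ℝ (Fin n)) : Set (EuclideanSpace ℝ (Fin n)) :=
  {ξ | ∀ y, g y ≥ g x + ⟪ξ, y - x⟫}

/-- The t-spherical subdifferential of `g` at `x`. -/
def sphSubdiff {n : ℕ} (g : EuclideanSpace ℝ (Fin n) → ℝ) (t : ℝ)
    (x : EuclideanSpace ℝ (Fin n)) : Set (EuclideanSpace ℝ (Fin n)) :=
  convexHull ℝ {ξ | ∃ d : EuclideanSpace ℝ (Fin n), ‖d‖ = 1 ∧ ξ ∈ subdiff g (x + t • d)}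

theorem ConvexOn.exists_inner_minorant_of_lt {E : Type*} [NormedAddCommGroup E]
    [InnerProductSpace ℝ E] [CompleteSpace E] {g : E → ℝ} (hg : ConvexOn ℝ Set.univ g)
    (hgc : LowerSemicontinuous g) {x : E} {a : ℝ} (ha : a < g x) :
    ∃ ξ : E, ∀ z, a + ⟪ξ, z - x⟫ ≤ g z := by
  obtain ⟨l, c, hle, hlx⟩ := hg.exists_affine_le_of_lt (𝕜 := ℝ) (Set.mem_univ x) ha
    isClosed_univ (hgc.lowerSemicontinuousOn _)
  refine ⟨(InnerProductSpace.toDual ℝ E).symm l, fun z => ?_⟩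
  have hz : l z + c ≤ g z := by simpa using hle ⟨z, Set.mem_univ z⟩
  simp only [RCLike.re_to_real] at hlx
  rw [InnerProductSpace.toDual_symm_apply, map_sub]
  linarith

section EpsSubdiff

variable {n : ℕ} {g g₁ g₂ : EuclideanSpace ℝ (Fin n) → ℝ}

theorem mem_epsSubdiff_of_inner_minorant {ξ y : EuclideanSpace ℝ (Fin n)} {a : ℝ}
    (hξ : ∀ z, a + ⟪ξ, z - y⟫ ≤ g z) (x : EuclideanSpace ℝ (Fin n)) :
    ξ ∈ epsSubdiff g (g x - (a + ⟪ξ, x - y⟫)) x := by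
  intro z
  have hsplit : ⟪ξ, z - y⟫ = ⟪ξ, z - x⟫ + ⟪ξ, x - y⟫ := by
    rw [← inner_add_right, sub_add_sub_cancel]
  linarith [hξ z]

theorem epsSubdiff_subset_of_forall_sub_le {x : EuclideanSpace ℝ (Fin n)}
    (hmin : ∀ y, g₁ x - g₂ x ≤ g₁ y - g₂ y) (ε : ℝ) :
    epsSubdiff g₂ ε x ⊆ epsSubdiff g₁ ε x :=
  fun ξ hξ y => by linarith [hξ y, hmin y]

theorem sub_le_sub_of_forall_epsSubdiff_subset {x : EuclideanSpace ℝ (Fin n)}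
    (h₂ : ConvexOn ℝ Set.univ g₂)
    (hsub : ∀ ε : ℝ, 0 ≤ ε → epsSubdiff g₂ ε x ⊆ epsSubdiff g₁ ε x)
    (y : EuclideanSpace ℝ (Fin n)) :
    g₁ x - g₂ x ≤ g₁ y - g₂ y := by
  refine le_of_forall_pos_le_add fun δ hδ => ?_
  obtain ⟨ξ, hξ⟩ := h₂.exists_inner_minorant_of_lt
    h₂.locallyLipschitz.continuous.lowerSemicontinuous (sub_lt_self (g₂ y) hδ)
  have hε : 0 ≤ g₂ x - (g₂ y - δ + ⟪ξ, x - y⟫) := sub_nonneg.2 (hξ x)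
  have hy := hsub _ hε (mem_epsSubdiff_of_inner_minorant hξ x) y
  have hcancel : ⟪ξ, y - x⟫ + ⟪ξ, x - y⟫ = 0 := by
    rw [← inner_add_right, sub_add_sub_cancel, sub_self, inner_zero_right]
  linarith

end EpsSubdiff

theorem global_min_iff_eps_subdiff_inclusion_general {n : ℕ}
    (f₁ f₂ f : EuclideanSpace ℝ (Fin n) → ℝ)
    (h₂ : ConvexOn ℝ Set.univ f₂)
    (hf : ∀ x, f x = f₁ x - f₂ x)
    (xstar : EuclideanSpace ℝ (Fin n)) :
    (∀ x, f xstar ≤ f x) ↔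
      (∀ ε : ℝ, 0 ≤ ε → epsSubdiff f₂ ε xstar ⊆ epsSubdiff f₁ ε xstar) := by
  simp only [hf]
  exact ⟨fun hmin ε _ => epsSubdiff_subset_of_forall_sub_le hmin ε,
    sub_le_sub_of_forall_epsSubdiff_subset h₂⟩

theorem global_min_iff_eps_subdiff_inclusion {n : ℕ}
    (f₁ f₂ f : EuclideanSpace ℝ (Fin n) → ℝ)
    (h₁ : ConvexOn ℝ Set.univ f₁) (h₂ : ConvexOn ℝ Set.univ f₂)
    (hf : ∀ x, f x = f₁ x - f₂ x)
    (xstar : EuclideanSpace ℝ (Fin n)) :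
    (∀ x, f xstar ≤ f x) ↔
      (∀ ε : ℝ, 0 ≤ ε → epsSubdiff f₂ ε xstar ⊆ epsSubdiff f₁ ε xstar) :=
  global_min_iff_eps_subdiff_inclusion_general f₁ f₂ f h₂ hf xstar
end

section
/- Let f₁, f₂ : ℝⁿ → ℝ be convex functions and f = f₁ − f₂. Let x* ∈ ℝⁿ be a global minimizer of f (f(x*) ≤ f(x) for all x), let x̄ ∈ ℝⁿ be a local minimizer of f, and set α = f(x̄) − f(x*) (so α ≥ 0). Then for every ε ≥ 0 one has ∂_ε f₂(x̄) ⊆ ∂_{ε+α} f₁(x̄). -/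
open scoped RealInnerProductSpace

theorem epsSubdiff_subset_of_sub_ge {n : ℕ} {g₁ g₂ : EuclideanSpace ℝ (Fin n) → ℝ}
    {x : EuclideanSpace ℝ (Fin n)} {α : ℝ} (hmin : ∀ y, g₁ x - g₂ x - α ≤ g₁ y - g₂ y) (ε : ℝ) :
    epsSubdiff g₂ ε x ⊆ epsSubdiff g₁ (ε + α) x := by
  intro ξ hξ y
  have hsub : g₂ y ≥ g₂ x + ⟪ξ, y - x⟫ - ε := hξ y
  linarith [hmin y]

theorem eps_subdiff_inclusion_at_local_min_general {n : ℕ}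
    (f₁ f₂ f : EuclideanSpace ℝ (Fin n) → ℝ)
    (hf : ∀ x, f x = f₁ x - f₂ x)
    (xstar xbar : EuclideanSpace ℝ (Fin n))
    (hglob : ∀ x, f xstar ≤ f x)
    (α : ℝ) (hα : α = f xbar - f xstar) :
    ∀ ε : ℝ, 0 ≤ ε → epsSubdiff f₂ ε xbar ⊆ epsSubdiff f₁ (ε + α) xbar := by
  intro ε _
  refine epsSubdiff_subset_of_sub_ge (fun y => ?_) ε
  rw [← hf, ← hf, hα]
  linarith [hglob y]

theorem eps_subdiff_inclusion_at_local_min {n : ℕ}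
    (f₁ f₂ f : EuclideanSpace ℝ (Fin n) → ℝ)
    (h₁ : ConvexOn ℝ Set.univ f₁) (h₂ : ConvexOn ℝ Set.univ f₂)
    (hf : ∀ x, f x = f₁ x - f₂ x)
    (xstar xbar : EuclideanSpace ℝ (Fin n))
    (hglob : ∀ x, f xstar ≤ f x)
    (hloc : ∃ U : Set (EuclideanSpace ℝ (Fin n)),
      IsOpen U ∧ xbar ∈ U ∧ ∀ y ∈ U, f xbar ≤ f y)
    (α : ℝ) (hα : α = f xbar - f xstar) :
    ∀ ε : ℝ, 0 ≤ ε → epsSubdiff f₂ ε xbar ⊆ epsSubdiff f₁ (ε + α) xbar :=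
  eps_subdiff_inclusion_at_local_min_general f₁ f₂ f hf xstar xbar hglob α hα
end

section
/- Let f₁, f₂ : ℝⁿ → ℝ be convex functions and f = f₁ − f₂. Suppose x̄ ∈ ℝⁿ is a local minimizer of f but not a global minimizer, ε̄ > 0, ξ̄₂ ∈ ∂_ε̄ f₂(x̄) and ξ̄₂ ∉ ∂_ε̄ f₁(x̄). Define f̂(y) = f₁(y) − (f₂(x̄) + ⟨ξ̄₂, y − x̄⟩ − ε̄) for y ∈ ℝⁿ. Then f̂ is an overestimate of f, i.e., f(y) ≤ f̂(y) for all y ∈ ℝⁿ, and x̄ is not a global minimizer of f̂, i.e., there exists y ∈ ℝⁿ with f̂(y) < f̂(x̄). -/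
open scoped RealInnerProductSpace

theorem exists_lt_of_notMem_epsSubdiff {n : ℕ} {g : EuclideanSpace ℝ (Fin n) → ℝ} {ε : ℝ}
    {x ξ : EuclideanSpace ℝ (Fin n)} (h : ξ ∉ epsSubdiff g ε x) :
    ∃ y, g y < g x + ⟪ξ, y - x⟫ - ε := by
  simpa only [epsSubdiff, Set.mem_ofPred_eq, not_forall, ge_iff_le, not_le] using h

theorem fhat_overestimates_and_escapes_general {n : ℕ}
    (f₁ f₂ f : EuclideanSpace ℝ (Fin n) → ℝ)
    (hf : ∀ x, f x = f₁ x - f₂ x)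
    (xbar : EuclideanSpace ℝ (Fin n))
    (εbar : ℝ) (hεbar : 0 < εbar)
    (ξbar₂ : EuclideanSpace ℝ (Fin n))
    (hξ₂ : ξbar₂ ∈ epsSubdiff f₂ εbar xbar)
    (hξ₂' : ξbar₂ ∉ epsSubdiff f₁ εbar xbar)
    (fhat : EuclideanSpace ℝ (Fin n) → ℝ)
    (hfhat : ∀ y, fhat y = f₁ y - (f₂ xbar + ⟪ξbar₂, y - xbar⟫ - εbar)) :
    (∀ y, f y ≤ fhat y) ∧ (∃ y, fhat y < fhat xbar) := by
  have hfhat_xbar : fhat xbar = f₁ xbar - f₂ xbar + εbar := by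
    simp only [hfhat, sub_self, inner_zero_right]
    ring
  refine ⟨fun y => ?_, ?_⟩
  · rw [hf, hfhat]
    linarith [hξ₂ y]
  · obtain ⟨y, hy⟩ := exists_lt_of_notMem_epsSubdiff hξ₂'
    exact ⟨y, by rw [hfhat, hfhat_xbar]; linarith⟩

theorem fhat_overestimates_and_escapes {n : ℕ}
    (f₁ f₂ f : EuclideanSpace ℝ (Fin n) → ℝ)
    (h₁ : ConvexOn ℝ Set.univ f₁) (h₂ : ConvexOn ℝ Set.univ f₂)
    (hf : ∀ x, f x = f₁ x - f₂ x)
    (xbar : EuclideanSpace ℝ (Fin n))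
    (hloc : ∃ U : Set (EuclideanSpace ℝ (Fin n)),
      IsOpen U ∧ xbar ∈ U ∧ ∀ y ∈ U, f xbar ≤ f y)
    (hnotglob : ¬ (∀ y, f xbar ≤ f y))
    (εbar : ℝ) (hεbar : 0 < εbar)
    (ξbar₂ : EuclideanSpace ℝ (Fin n))
    (hξ₂ : ξbar₂ ∈ epsSubdiff f₂ εbar xbar)
    (hξ₂' : ξbar₂ ∉ epsSubdiff f₁ εbar xbar)
    (fhat : EuclideanSpace ℝ (Fin n) → ℝ)
    (hfhat : ∀ y, fhat y = f₁ y - (f₂ xbar + ⟪ξbar₂, y - xbar⟫ - εbar)) :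
    (∀ y, f y ≤ fhat y) ∧ (∃ y, fhat y < fhat xbar) :=
  fhat_overestimates_and_escapes_general f₁ f₂ f hf xbar εbar hεbar ξbar₂ hξ₂ hξ₂' fhat hfhat
end

section
/- Let f₁, f₂ : ℝⁿ → ℝ be convex functions and f = f₁ − f₂. Suppose x̄ ∈ ℝⁿ is a local minimizer of f but not a global minimizer, ε̄ > 0, ξ̄₂ ∈ ∂_ε̄ f₂(x̄) and ξ̄₂ ∉ ∂_ε̄ f₁(x̄). Let ξ̄₁ ∈ ∂_ε̄ f₁(x̄) satisfy ‖ξ̄₁ − ξ̄₂‖ ≤ ‖ξ₁ − ξ̄₂‖ for all ξ₁ ∈ ∂_ε̄ f₁(x̄), and define f̂(y) = f₁(y) − (f₂(x̄) + ⟨ξ̄₂, y − x̄⟩ − ε̄). Then there exists ᾱ > 0 such that f̂(x̄ − ᾱ(ξ̄₁ − ξ̄₂)) − f̂(x̄) ≤ −ε̄ − (ᾱ/2)‖ξ̄₁ − ξ̄₂‖² and f(x̄ − ᾱ(ξ̄₁ − ξ̄₂)) − f(x̄) ≤ −(ᾱ/2)‖ξ̄₁ − ξ̄₂‖². -/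
open scoped RealInnerProductSpace

/-!
Write `g = ξ̄₁ - ξ̄₂`, which is nonzero. If no step `α > 0` along `-g` decreased
`f₁ - ⟪ξ̄₂, ·⟫` by `ε̄ + (α/2)‖g‖²`, the ray `α ↦ (x̄ - α g, f₁ x̄ - ε̄ - α (⟪ξ̄₂, g⟫ + ‖g‖²/2))`
would miss the open strict epigraph of `f₁`. A separating hyperplane is then the graph of an
affine minorant of `f₁`, i.e. an `ε̄`-subgradient `ξ` with `⟪ξ - ξ̄₂, g⟫ ≤ ‖g‖²/2`. But `ξ̄₁` is
the projection of `ξ̄₂` onto the convex set `∂_ε̄ f₁(x̄)`, so `⟪ξ - ξ̄₂, g⟫ ≥ ‖g‖²`, forcing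
`g = 0`. The estimate for `f` follows from `f ≤ f̂` and `f̂ x̄ = f x̄ + ε̄`.
-/

open Set Filter Pointwise

section Separation

variable {E : Type*} [TopologicalSpace E] [AddCommGroup E] [Module ℝ E]
  [IsTopologicalAddGroup E] [ContinuousSMul ℝ E]

lemma exists_separation_strictEpigraph_ray {h : E → ℝ} (hconv : ConvexOn ℝ univ h)
    (hcont : Continuous h) {x d : E} {a b : ℝ}
    (hray : ∀ α : ℝ, 0 ≤ α → a + α * b ≤ h (x + α • d)) :
    ∃ (φ : E →L[ℝ] ℝ) (c u : ℝ), (∀ y t, h y < t → φ y + t * c < u) ∧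
      ∀ α : ℝ, 0 ≤ α → u ≤ φ x + α * φ d + (a + α * b) * c := by
  let S : Set (E × ℝ) := {p | h p.1 < p.2}
  let T : Set (E × ℝ) := (x, a) +ᵥ LinearMap.toSpanSingleton ℝ (E × ℝ) (d, b) '' Ici 0
  have hS : Convex ℝ S := by simpa using hconv.convex_strict_epigraph
  have hT : Convex ℝ T := ((convex_Ici 0).linear_image _).vadd _
  have hST : Disjoint S T := by
    rw [Set.disjoint_left]
    rintro _ hp ⟨_, ⟨α, hα, rfl⟩, rfl⟩
    exact (hray α hα).not_gt (by simpa [S] using hp)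
  obtain ⟨F, u, hFS, hFT⟩ :=
    geometric_hahn_banach_open hS (isOpen_lt (hcont.comp continuous_fst) continuous_snd) hT hST
  have hF (y : E) (r : ℝ) : F (y, r) = F (y, 0) + r * F (0, 1) := by
    rw [← smul_eq_mul, ← map_smul, ← map_add]; simp
  refine ⟨F.comp (.inl ℝ E ℝ), F (0, 1), u, fun y t hyt => ?_, fun α hα => ?_⟩
  · simpa [hF y t] using hFS (y, t) hyt
  · have : u ≤ F ((x, a) + α • (d, b)) := hFT _ ⟨_, ⟨α, hα, rfl⟩, rfl⟩
    rw [map_add, map_smul, smul_eq_mul, hF x, hF d] at this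
    simp only [ContinuousLinearMap.comp_apply, ContinuousLinearMap.inl_apply]
    linarith

lemma exists_continuousLinearMap_minorant_of_le_on_ray {h : E → ℝ}
    (hconv : ConvexOn ℝ univ h) (hcont : Continuous h) {x d : E} {a b : ℝ}
    (hray : ∀ α : ℝ, 0 ≤ α → a + α * b ≤ h (x + α • d)) :
    ∃ ℓ : E →L[ℝ] ℝ, (∀ y, a + ℓ (y - x) ≤ h y) ∧ b ≤ ℓ d := by
  obtain ⟨φ, c, u, hS, hT⟩ := exists_separation_strictEpigraph_ray hconv hcont hray
  have hT₀ : u ≤ φ x + a * c := by simpa using hT 0 le_rfl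
  have hc : c < 0 := by
    have := hS x (h x + |a - h x| + 1) (by linarith [abs_nonneg (a - h x)])
    exact neg_of_mul_neg_right (a := h x + |a - h x| + 1 - a) (by linarith)
      (by linarith [le_abs_self (a - h x)])
  have hepi (y : E) : φ y + h y * c ≤ u := le_of_forall_pos_lt_add fun s hs => by
    have := hS y (h y + s / -c) (by linarith [div_pos hs (neg_pos.2 hc)])
    have hsc : s / -c * c = -s := by rw [div_neg, neg_mul, div_mul_cancel₀ s hc.ne]
    linarith
  have hslope : 0 ≤ φ d + b * c := by
    by_contra! hk
    obtain ⟨α, hlt, hα⟩ := ((tendsto_id.atTop_mul_const_of_neg hk).eventually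
      (eventually_lt_atBot ((h x - a) * c))).and (eventually_ge_atTop 0) |>.exists
    rw [id] at hlt
    linarith [hT _ hα, hepi x]
  refine ⟨(-c)⁻¹ • φ, fun y => ?_, ?_⟩
  · rw [smul_apply, map_sub, smul_eq_mul, ← le_sub_iff_add_le',
      inv_mul_le_iff₀ (neg_pos.2 hc)]
    linarith [hepi y]
  · rw [smul_apply, smul_eq_mul, le_inv_mul_iff₀ (neg_pos.2 hc)]
    linarith

end Separation

lemma real_inner_sub_le_zero_of_forall_norm_sub_le {F : Type*} [NormedAddCommGroup F]
    [InnerProductSpace ℝ F] {K : Set F} (hK : Convex ℝ K) {u v : F} (hv : v ∈ K)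
    (hmin : ∀ w ∈ K, ‖v - u‖ ≤ ‖w - u‖) : ∀ w ∈ K, ⟪u - v, w - v⟫ ≤ 0 := by
  have : Nonempty K := ⟨⟨v, hv⟩⟩
  refine (norm_eq_iInf_iff_real_inner_le_zero hK hv).1 (le_antisymm ?_ ?_)
  · exact le_ciInf fun w => by simpa only [norm_sub_rev u] using hmin w w.2
  · have hbdd : BddBelow (range fun w : K => ‖u - w‖) :=
      ⟨0, forall_mem_range.2 fun _ => norm_nonneg _⟩
    exact ciInf_le hbdd ⟨v, hv⟩

section EpsSubdiff

variable {n : ℕ}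

lemma convex_epsSubdiff (g : EuclideanSpace ℝ (Fin n) → ℝ) (ε : ℝ)
    (x : EuclideanSpace ℝ (Fin n)) : Convex ℝ (epsSubdiff g ε x) := by
  intro ξ hξ η hη a b ha hb hab y
  have hξy : g x + ⟪ξ, y - x⟫ - ε ≤ g y := hξ y
  have hηy : g x + ⟪η, y - x⟫ - ε ≤ g y := hη y
  obtain rfl : b = 1 - a := by linarith
  rw [inner_add_left, real_inner_smul_left, real_inner_smul_left]
  nlinarith [mul_le_mul_of_nonneg_left hξy ha, mul_le_mul_of_nonneg_left hηy hb]

lemma exists_mem_epsSubdiff_le_inner_of_le_on_ray {g : EuclideanSpace ℝ (Fin n) → ℝ}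
    (hg : ConvexOn ℝ univ g) {ε b : ℝ} {x d : EuclideanSpace ℝ (Fin n)}
    (hray : ∀ α : ℝ, 0 ≤ α → g x - ε + α * b ≤ g (x + α • d)) :
    ∃ ξ ∈ epsSubdiff g ε x, b ≤ ⟪ξ, d⟫ := by
  obtain ⟨ℓ, hℓ, hb⟩ := exists_continuousLinearMap_minorant_of_le_on_ray hg
    (continuousOn_univ.1 (hg.continuousOn isOpen_univ)) hray
  refine ⟨(InnerProductSpace.toDual ℝ _).symm ℓ, fun y => ?_, ?_⟩ <;>
    simp only [InnerProductSpace.toDual_symm_apply]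
  · linarith [hℓ y]
  · exact hb

theorem exists_descent_of_nearest_mem_epsSubdiff {f : EuclideanSpace ℝ (Fin n) → ℝ}
    (hf : ConvexOn ℝ univ f) {ε : ℝ} (hε : 0 < ε) {x ξ₁ ξ₂ : EuclideanSpace ℝ (Fin n)}
    (hξ₁ : ξ₁ ∈ epsSubdiff f ε x) (hmin : ∀ ξ ∈ epsSubdiff f ε x, ‖ξ₁ - ξ₂‖ ≤ ‖ξ - ξ₂‖)
    (hne : ξ₁ ≠ ξ₂) :
    ∃ α > 0, f (x - α • (ξ₁ - ξ₂)) - f x + α * ⟪ξ₂, ξ₁ - ξ₂⟫ ≤ -ε - α / 2 * ‖ξ₁ - ξ₂‖ ^ 2 := by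
  set g := ξ₁ - ξ₂ with hg
  by_contra! hcon
  have hray (α : ℝ) (hα : 0 ≤ α) : f x - ε + α * (-⟪ξ₂, g⟫ - ‖g‖ ^ 2 / 2) ≤ f (x + α • -g) := by
    rcases hα.eq_or_lt with rfl | hα
    · simp only [zero_mul, zero_smul, add_zero]; linarith
    · rw [smul_neg, ← sub_eq_add_neg]; linarith [hcon α hα]
  obtain ⟨ξ, hξ, hslope⟩ := exists_mem_epsSubdiff_le_inner_of_le_on_ray hf hray
  have hproj := real_inner_sub_le_zero_of_forall_norm_sub_le (convex_epsSubdiff f ε x) hξ₁ hmin ξ hξ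
  have hg₀ : 0 < ‖g‖ ^ 2 := pow_pos (norm_pos_iff.2 (sub_ne_zero.2 hne)) 2
  have h₁ : ξ₂ - ξ₁ = -g := (neg_sub _ _).symm
  have h₂ : ξ - ξ₁ = (ξ - ξ₂) - g := by rw [hg]; abel
  rw [h₁, h₂, inner_neg_left, inner_sub_right, real_inner_self_eq_norm_sq, inner_sub_right] at hproj
  rw [inner_neg_right] at hslope
  linarith [real_inner_comm g ξ₂, real_inner_comm g ξ]

end EpsSubdiff

theorem descent_estimates_for_fhat_general {n : ℕ}
    (f₁ f₂ f : EuclideanSpace ℝ (Fin n) → ℝ)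
    (h₁ : ConvexOn ℝ Set.univ f₁)
    (hf : ∀ x, f x = f₁ x - f₂ x)
    (xbar : EuclideanSpace ℝ (Fin n))
    (εbar : ℝ) (hεbar : 0 < εbar)
    (ξbar₂ : EuclideanSpace ℝ (Fin n))
    (hξ₂ : ξbar₂ ∈ epsSubdiff f₂ εbar xbar)
    (hξ₂' : ξbar₂ ∉ epsSubdiff f₁ εbar xbar)
    (ξbar₁ : EuclideanSpace ℝ (Fin n))
    (hξ₁ : ξbar₁ ∈ epsSubdiff f₁ εbar xbar)
    (hξ₁min : ∀ ξ₁ ∈ epsSubdiff f₁ εbar xbar, ‖ξbar₁ - ξbar₂‖ ≤ ‖ξ₁ - ξbar₂‖)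
    (fhat : EuclideanSpace ℝ (Fin n) → ℝ)
    (hfhat : ∀ y, fhat y = f₁ y - (f₂ xbar + ⟪ξbar₂, y - xbar⟫ - εbar)) :
    ∃ αbar : ℝ, 0 < αbar ∧
      fhat (xbar - αbar • (ξbar₁ - ξbar₂)) - fhat xbar ≤
        -εbar - (αbar / 2) * ‖ξbar₁ - ξbar₂‖ ^ 2 ∧
      f (xbar - αbar • (ξbar₁ - ξbar₂)) - f xbar ≤
        -(αbar / 2) * ‖ξbar₁ - ξbar₂‖ ^ 2 := by
  obtain ⟨α, hα, hdescent⟩ :=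
    exists_descent_of_nearest_mem_epsSubdiff h₁ hεbar hξ₁ hξ₁min fun h => hξ₂' (h ▸ hξ₁)
  have hfhat_step : fhat (xbar - α • (ξbar₁ - ξbar₂)) - fhat xbar =
      f₁ (xbar - α • (ξbar₁ - ξbar₂)) - f₁ xbar + α * ⟪ξbar₂, ξbar₁ - ξbar₂⟫ := by
    rw [hfhat, hfhat, sub_sub_cancel_left, sub_self, inner_neg_right, real_inner_smul_right,
      inner_zero_right]
    ring
  have hf_le_fhat (y) : f y - f xbar ≤ fhat y - fhat xbar + εbar := by
    have : f₂ xbar + ⟪ξbar₂, y - xbar⟫ - εbar ≤ f₂ y := hξ₂ y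
    rw [hf, hf, hfhat, hfhat, sub_self, inner_zero_right]
    linarith
  exact ⟨α, hα, by linarith, by linarith [hf_le_fhat (xbar - α • (ξbar₁ - ξbar₂))]⟩

theorem descent_estimates_for_fhat {n : ℕ}
    (f₁ f₂ f : EuclideanSpace ℝ (Fin n) → ℝ)
    (h₁ : ConvexOn ℝ Set.univ f₁) (h₂ : ConvexOn ℝ Set.univ f₂)
    (hf : ∀ x, f x = f₁ x - f₂ x)
    (xbar : EuclideanSpace ℝ (Fin n))
    (hloc : ∃ U : Set (EuclideanSpace ℝ (Fin n)),
      IsOpen U ∧ xbar ∈ U ∧ ∀ y ∈ U, f xbar ≤ f y)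
    (hnotglob : ¬ (∀ y, f xbar ≤ f y))
    (εbar : ℝ) (hεbar : 0 < εbar)
    (ξbar₂ : EuclideanSpace ℝ (Fin n))
    (hξ₂ : ξbar₂ ∈ epsSubdiff f₂ εbar xbar)
    (hξ₂' : ξbar₂ ∉ epsSubdiff f₁ εbar xbar)
    (ξbar₁ : EuclideanSpace ℝ (Fin n))
    (hξ₁ : ξbar₁ ∈ epsSubdiff f₁ εbar xbar)
    (hξ₁min : ∀ ξ₁ ∈ epsSubdiff f₁ εbar xbar, ‖ξbar₁ - ξbar₂‖ ≤ ‖ξ₁ - ξbar₂‖)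
    (fhat : EuclideanSpace ℝ (Fin n) → ℝ)
    (hfhat : ∀ y, fhat y = f₁ y - (f₂ xbar + ⟪ξbar₂, y - xbar⟫ - εbar)) :
    ∃ αbar : ℝ, 0 < αbar ∧
      fhat (xbar - αbar • (ξbar₁ - ξbar₂)) - fhat xbar ≤
        -εbar - (αbar / 2) * ‖ξbar₁ - ξbar₂‖ ^ 2 ∧
      f (xbar - αbar • (ξbar₁ - ξbar₂)) - f xbar ≤
        -(αbar / 2) * ‖ξbar₁ - ξbar₂‖ ^ 2 :=
  descent_estimates_for_fhat_general f₁ f₂ f h₁ hf xbar εbar hεbar ξbar₂ hξ₂ hξ₂' ξbar₁ hξ₁ hξ₁min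
    fhat hfhat
end

section
/- Let f₁, f₂ : ℝⁿ → ℝ be convex functions and let x̄ ∈ ℝⁿ be a local minimizer of f = f₁ − f₂. Then x̄ is an inf-stationary point, i.e., ∂f₂(x̄) ⊆ ∂f₁(x̄). -/
open scoped RealInnerProductSpace

/-!
If `ξ ∈ ∂f₂(x̄)`, then near `x̄` we have `f₁ z - f₁ x̄ ≥ f₂ z - f₂ x̄ ≥ ⟪ξ, z - x̄⟫`, so `x̄` is a
local minimizer of the convex function `z ↦ f₁ z - ⟪ξ, z⟫`. For a convex function a local
minimizer is a global one, and global minimality of `x̄` is exactly `ξ ∈ ∂f₁(x̄)`.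
-/

open Filter Topology

theorem ConvexOn.add_inner_sub_le_of_eventually {E : Type*} [NormedAddCommGroup E]
    [InnerProductSpace ℝ E] {g : E → ℝ} (hg : ConvexOn ℝ Set.univ g) {x ξ : E}
    (h : ∀ᶠ z in 𝓝 x, g x + ⟪ξ, z - x⟫ ≤ g z) (y : E) : g x + ⟪ξ, y - x⟫ ≤ g y := by
  have hconv : ConvexOn ℝ Set.univ (fun z => g z - ⟪ξ, z⟫) :=
    hg.sub ((innerₗ E ξ).concaveOn convex_univ)
  have hmin : IsLocalMin (fun z => g z - ⟪ξ, z⟫) x := by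
    filter_upwards [h] with z hz
    rw [inner_sub_right] at hz
    linarith
  have := IsMinOn.of_isLocalMin_of_convex_univ hmin hconv y
  rw [inner_sub_right]
  linarith

theorem local_min_is_inf_stationary_general {n : ℕ}
    (f₁ f₂ f : EuclideanSpace ℝ (Fin n) → ℝ)
    (h₁ : ConvexOn ℝ Set.univ f₁)
    (hf : ∀ x, f x = f₁ x - f₂ x)
    (xbar : EuclideanSpace ℝ (Fin n))
    (hloc : ∃ U : Set (EuclideanSpace ℝ (Fin n)),
      IsOpen U ∧ xbar ∈ U ∧ ∀ y ∈ U, f xbar ≤ f y) :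
    subdiff f₂ xbar ⊆ subdiff f₁ xbar := by
  obtain ⟨U, hU, hxU, hmin⟩ := hloc
  intro ξ hξ
  refine h₁.add_inner_sub_le_of_eventually ?_
  filter_upwards [hU.mem_nhds hxU] with z hz
  have hsub := hξ z
  have hfz := hmin z hz
  rw [hf, hf] at hfz
  linarith

theorem local_min_is_inf_stationary {n : ℕ}
    (f₁ f₂ f : EuclideanSpace ℝ (Fin n) → ℝ)
    (h₁ : ConvexOn ℝ Set.univ f₁) (h₂ : ConvexOn ℝ Set.univ f₂)
    (hf : ∀ x, f x = f₁ x - f₂ x)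
    (xbar : EuclideanSpace ℝ (Fin n))
    (hloc : ∃ U : Set (EuclideanSpace ℝ (Fin n)),
      IsOpen U ∧ xbar ∈ U ∧ ∀ y ∈ U, f xbar ≤ f y) :
    subdiff f₂ xbar ⊆ subdiff f₁ xbar :=
  local_min_is_inf_stationary_general f₁ f₂ f h₁ hf xbar hloc
end

section
/- Let f : ℝⁿ → ℝ be a convex function, x ∈ ℝⁿ and t > 0. Then the t-spherical subdifferential D_t f(x) is convex and compact. -/
open scoped RealInnerProductSpace

/-!
A convex function on `ℝⁿ` is continuous, and the generating set of `D_t f(x)` is the union of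
the subdifferentials of `f` over the compact image of the unit sphere under `d ↦ x + t • d`.
A continuous function has a closed subdifferential graph, and its subgradients at points of a
compact set `K` are bounded by the oscillation of `f` on the `1`-thickening of `K`, so this union
is compact. By Carathéodory's theorem the convex hull of a compact set in finite dimension is a
finite union of continuous images of `stdSimplex × sᵏ`, hence compact.
-/

open Metric Module

section ConvexHull

theorem exists_fin_sum_eq_of_mem_convexHull {𝕜 E : Type*} [Field 𝕜] [LinearOrder 𝕜]
    [IsStrictOrderedRing 𝕜] [AddCommGroup E] [Module 𝕜 E] [FiniteDimensional 𝕜 E]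
    {s : Set E} {x : E} (hx : x ∈ convexHull 𝕜 s) :
    ∃ k ≤ finrank 𝕜 E + 1, ∃ w ∈ stdSimplex 𝕜 (Fin k), ∃ z : Fin k → E,
      (∀ i, z i ∈ s) ∧ ∑ i, w i • z i = x := by
  obtain ⟨ι, _, z, w, hzs, hind, hwpos, hw1, hwx⟩ := eq_pos_convex_span_of_mem_convexHull hx
  let e := (Fintype.equivFin ι).symm
  refine ⟨Fintype.card ι, ?_, w ∘ e, ⟨fun i ↦ (hwpos _).le, ?_⟩, z ∘ e, fun i ↦ hzs ⟨_, rfl⟩, ?_⟩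
  · exact hind.card_le_finrank_succ.trans (Nat.add_le_add_right (Submodule.finrank_le _) 1)
  · exact (e.sum_comp w).trans hw1
  · exact (e.sum_comp fun i ↦ w i • z i).trans hwx

theorem isCompact_convexHull {𝕜 E : Type*} [Field 𝕜] [LinearOrder 𝕜] [IsStrictOrderedRing 𝕜]
    [TopologicalSpace 𝕜] [OrderClosedTopology 𝕜] [CompactIccSpace 𝕜] [ContinuousAdd 𝕜]
    [AddCommGroup E] [Module 𝕜 E] [TopologicalSpace E] [ContinuousAdd E] [ContinuousSMul 𝕜 E]
    [FiniteDimensional 𝕜 E] {s : Set E} (hs : IsCompact s) :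
    IsCompact (convexHull 𝕜 s) := by
  have hcover : convexHull 𝕜 s = ⋃ k ∈ Finset.range (finrank 𝕜 E + 2),
      (fun p : (Fin k → 𝕜) × (Fin k → E) ↦ ∑ i, p.1 i • p.2 i) ''
        (stdSimplex 𝕜 (Fin k) ×ˢ Set.univ.pi fun _ ↦ s) := by
    refine subset_antisymm (fun x hx ↦ ?_) ?_
    · obtain ⟨k, hk, w, hw, z, hzs, rfl⟩ := exists_fin_sum_eq_of_mem_convexHull hx
      exact Set.mem_biUnion (Finset.mem_range.2 (Nat.lt_succ_of_le hk))
        ⟨(w, z), ⟨hw, fun i _ ↦ hzs i⟩, rfl⟩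
    · simp only [Set.iUnion_subset_iff, Set.image_subset_iff]
      rintro k - ⟨w, z⟩ ⟨⟨hw0, hw1⟩, hz⟩
      exact (convex_convexHull 𝕜 s).sum_mem (fun i _ ↦ hw0 i) hw1
        fun i _ ↦ subset_convexHull 𝕜 s (hz i trivial)
  rw [hcover]
  exact (Finset.range _).isCompact_biUnion fun k _ ↦
    ((isCompact_stdSimplex 𝕜 (Fin k)).prod (isCompact_univ_pi fun _ ↦ hs)).image (by fun_prop)

end ConvexHull

section Subdiff

variable {n : ℕ} {g : EuclideanSpace ℝ (Fin n) → ℝ}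

theorem isClosed_setOf_mem_subdiff (hg : Continuous g) :
    IsClosed {p : EuclideanSpace ℝ (Fin n) × EuclideanSpace ℝ (Fin n) | p.2 ∈ subdiff g p.1} := by
  have hinter : {p : EuclideanSpace ℝ (Fin n) × EuclideanSpace ℝ (Fin n) | p.2 ∈ subdiff g p.1} =
      ⋂ y, {p | g p.1 + ⟪p.2, y - p.1⟫ ≤ g y} := by
    ext
    simp [subdiff]
  rw [hinter]
  exact isClosed_iInter fun y ↦ isClosed_le (by fun_prop) continuous_const

/-- Test the subgradient inequality at `z + (r / ‖ξ‖) • ξ`. -/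
theorem mul_norm_le_of_mem_subdiff {z ξ : EuclideanSpace ℝ (Fin n)} {r M : ℝ} (hr : 0 ≤ r)
    (hM : ∀ y ∈ closedBall z r, g y ≤ M) (hξ : ξ ∈ subdiff g z) : r * ‖ξ‖ ≤ M - g z := by
  rcases eq_or_ne ξ 0 with rfl | hξ0
  · simpa using hM z (mem_closedBall_self hr)
  have hy : z + (r / ‖ξ‖) • ξ ∈ closedBall z r := by
    simp [dist_eq_norm, norm_smul, abs_of_nonneg hr, hξ0]
  have hinner : ⟪ξ, z + (r / ‖ξ‖) • ξ - z⟫ = r * ‖ξ‖ := by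
    rw [add_sub_cancel_left, inner_smul_right, real_inner_self_eq_norm_sq]
    field_simp
  linarith [hξ (z + (r / ‖ξ‖) • ξ), hM _ hy]

theorem isCompact_biUnion_subdiff (hg : Continuous g) {K : Set (EuclideanSpace ℝ (Fin n))}
    (hK : IsCompact K) : IsCompact (⋃ z ∈ K, subdiff g z) := by
  obtain ⟨C, hC⟩ := (hK.cthickening (r := 1)).exists_bound_of_continuousOn hg.continuousOn
  have hbound : ∀ z ∈ K, subdiff g z ⊆ closedBall 0 (2 * C) := fun z hz ξ hξ ↦ by
    have hgz := abs_le.1 (hC z (self_subset_cthickening K hz))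
    have hM : ∀ y ∈ closedBall z 1, g y ≤ C := fun y hy ↦
      (abs_le.1 (hC y (closedBall_subset_cthickening hz 1 hy))).2
    have := mul_norm_le_of_mem_subdiff zero_le_one hM hξ
    rw [mem_closedBall_zero_iff]
    linarith
  have hunion : ⋃ z ∈ K, subdiff g z = Prod.snd ''
      ((K ×ˢ closedBall 0 (2 * C)) ∩ {p | p.2 ∈ subdiff g p.1}) := by
    ext ξ
    simp only [Set.mem_iUnion, Set.mem_image, Set.mem_inter_iff, Set.mem_prod, Set.mem_ofPred_eq,
      Prod.exists, exists_eq_right, exists_prop]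
    exact ⟨fun ⟨z, hz, hξ⟩ ↦ ⟨z, ⟨hz, hbound z hz hξ⟩, hξ⟩, fun ⟨z, ⟨hz, _⟩, hξ⟩ ↦ ⟨z, hz, hξ⟩⟩
  rw [hunion]
  exact ((hK.prod (isCompact_closedBall 0 _)).inter_right
    (isClosed_setOf_mem_subdiff hg)).image continuous_snd

end Subdiff

theorem sphSubdiff_convex_compact_general {n : ℕ}
    (f : EuclideanSpace ℝ (Fin n) → ℝ) (hf : ConvexOn ℝ Set.univ f)
    (x : EuclideanSpace ℝ (Fin n)) (t : ℝ) :
    Convex ℝ (sphSubdiff f t x) ∧ IsCompact (sphSubdiff f t x) := by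
  have hfc : Continuous f := continuousOn_univ.1 (hf.continuousOn isOpen_univ)
  have hgen : {ξ | ∃ d : EuclideanSpace ℝ (Fin n), ‖d‖ = 1 ∧ ξ ∈ subdiff f (x + t • d)} =
      ⋃ z ∈ (fun d ↦ x + t • d) '' sphere 0 1, subdiff f z := by
    ext ξ
    simp
  have hsphere : IsCompact ((fun d ↦ x + t • d) '' sphere (0 : EuclideanSpace ℝ (Fin n)) 1) :=
    (isCompact_sphere 0 1).image (by fun_prop)
  refine ⟨convex_convexHull ℝ _, ?_⟩
  rw [sphSubdiff, hgen]
  exact isCompact_convexHull (isCompact_biUnion_subdiff hfc hsphere)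

theorem sphSubdiff_convex_compact {n : ℕ}
    (f : EuclideanSpace ℝ (Fin n) → ℝ) (hf : ConvexOn ℝ Set.univ f)
    (x : EuclideanSpace ℝ (Fin n)) (t : ℝ) (ht : 0 < t) :
    Convex ℝ (sphSubdiff f t x) ∧ IsCompact (sphSubdiff f t x) :=
  sphSubdiff_convex_compact_general f hf x t
end

section
/- Let n ≥ 1, let f : ℝⁿ → ℝ be a convex function, x ∈ ℝⁿ, t > 0 and ε ≥ 0. Then ∂_ε f(x) ⊆ D_t f(x) + closedBall(0, ε/t) (Minkowski sum with the closed ball of radius ε/t centered at the origin). -/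
open scoped RealInnerProductSpace Pointwise

/-!
Let `p` be the point of the compact convex set `D_t f(x)` nearest to `ξ ∈ ∂_ε f(x)`, and
`u = (ξ - p) / ‖ξ - p‖`. A subgradient `η` of `f` at `x + t u` lies in `D_t f(x)`, so the
projection inequality gives `⟪ξ - η, u⟫ ≥ ‖ξ - p‖`, while adding the `ε`-subgradient inequality
of `ξ` at `x + t u` to the subgradient inequality of `η` at `x` gives `t ⟪ξ - η, u⟫ ≤ ε`.
Compactness of `D_t f(x)` comes from Carathéodory's theorem and the local boundedness of
subgradients of a continuous convex function.
-/

open Set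

section ConvexHull

variable {E : Type*} [AddCommGroup E] [Module ℝ E]

def convexCombinationsOfCard (s : Set E) (m : ℕ) : Set E :=
  (fun p : (Fin m → ℝ) × (Fin m → E) => ∑ i, p.1 i • p.2 i) ''
    (stdSimplex ℝ (Fin m) ×ˢ univ.pi fun _ => s)

theorem convexCombinationsOfCard_subset_convexHull (s : Set E) (m : ℕ) :
    convexCombinationsOfCard s m ⊆ convexHull ℝ s := by
  rintro _ ⟨⟨w, z⟩, ⟨⟨hw₀, hw₁⟩, hz⟩, rfl⟩
  exact (convex_convexHull ℝ s).sum_mem (fun i _ => hw₀ i) hw₁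
    fun i _ => subset_convexHull ℝ s (hz i (mem_univ i))

theorem convexHull_eq_biUnion_convexCombinationsOfCard [FiniteDimensional ℝ E] (s : Set E) :
    convexHull ℝ s = ⋃ m ∈ Iic (Module.finrank ℝ E + 1), convexCombinationsOfCard s m := by
  refine subset_antisymm (fun x hx => ?_)
    (iUnion₂_subset fun m _ => convexCombinationsOfCard_subset_convexHull s m)
  obtain ⟨ι, _, z, w, hzs, hai, hw₀, hw₁, rfl⟩ := eq_pos_convex_span_of_mem_convexHull hx
  let e := (Fintype.equivFin ι).symm
  refine mem_iUnion₂_of_mem (hai.card_le_finrank_succ.trans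
    (Nat.add_le_add_right (Submodule.finrank_le _) 1)) ⟨(w ∘ e, z ∘ e),
    ⟨⟨fun i => (hw₀ _).le, (e.sum_comp w).trans hw₁⟩, fun i _ => hzs (mem_range_self _)⟩,
    e.sum_comp fun i => w i • z i⟩

variable [TopologicalSpace E] [ContinuousAdd E] [ContinuousSMul ℝ E]

theorem IsCompact.convexCombinationsOfCard {s : Set E} (hs : IsCompact s) (m : ℕ) :
    IsCompact (convexCombinationsOfCard s m) :=
  ((isCompact_stdSimplex ℝ (Fin m)).prod (isCompact_univ_pi fun _ => hs)).image <| by fun_prop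

theorem IsCompact.convexHull [FiniteDimensional ℝ E] {s : Set E} (hs : IsCompact s) :
    IsCompact (convexHull ℝ s) := by
  rw [convexHull_eq_biUnion_convexCombinationsOfCard]
  exact (finite_Iic _).isCompact_biUnion fun m _ => hs.convexCombinationsOfCard m

end ConvexHull

theorem ConvexOn.exists_strongDual_add_le {E : Type*} [AddCommGroup E] [Module ℝ E]
    [TopologicalSpace E] [IsTopologicalAddGroup E] [ContinuousSMul ℝ E] {f : E → ℝ}
    (hf : ConvexOn ℝ univ f) (hcont : Continuous f) (z : E) :
    ∃ g : StrongDual ℝ E, ∀ y, f z + g (y - z) ≤ f y := by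
  -- Separate `(z, f z)` from the open strict epigraph; the vertical slope `c` of the separating
  -- functional is negative, and `(-c)⁻¹` times its horizontal part is the subgradient.
  have hconv : Convex ℝ {p : E × ℝ | f p.1 < p.2} := by
    simpa only [mem_univ, true_and] using hf.convex_strict_epigraph
  obtain ⟨ℓ, hℓ⟩ := geometric_hahn_banach_open_point hconv
    (isOpen_lt (hcont.comp continuous_fst) continuous_snd) (x := (z, f z)) (lt_irrefl (f z))
  set L := ℓ.comp (ContinuousLinearMap.inl ℝ E ℝ)
  set c := ℓ (0, 1)
  have hℓ_apply (y : E) (r : ℝ) : ℓ (y, r) = L y + r * c := by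
    calc ℓ (y, r) = ℓ ((y, 0) + r • (0, 1)) := by simp
      _ = L y + r * c := by rw [map_add, map_smul, smul_eq_mul]; rfl
  have hsep (y : E) (r : ℝ) (hr : f y < r) : L y + r * c < L z + f z * c := by
    simpa only [hℓ_apply] using hℓ (y, r) hr
  have hc : c < 0 := by linarith [hsep z (f z + 1) (lt_add_one _)]
  have hsupport (y : E) : L y - L z ≤ -c * (f y - f z) := by
    refine le_of_forall_pos_lt_add fun δ hδ => ?_
    have := hsep y (f y + δ / -c) (lt_add_of_pos_right _ (div_pos hδ (neg_pos.2 hc)))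
    have hδc : δ / -c * c = -δ := by rw [div_neg, neg_mul, div_mul_cancel₀ δ hc.ne]
    linarith
  refine ⟨(-c)⁻¹ • L, fun y => ?_⟩
  have := (div_le_iff₀' (neg_pos.2 hc)).2 (hsupport y)
  rw [smul_apply, smul_eq_mul, map_sub, inv_mul_eq_div]
  linarith

theorem mem_add_closedBall_of_forall_exists_inner_le {E : Type*} [NormedAddCommGroup E]
    [InnerProductSpace ℝ E] {K : Set E} (hne : K.Nonempty) (hK : IsComplete K)
    (hconv : Convex ℝ K) {ξ : E} {r : ℝ} (hr : 0 ≤ r)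
    (h : ∀ u : E, ‖u‖ = 1 → ∃ η ∈ K, ⟪ξ - η, u⟫ ≤ r) : ξ ∈ K + Metric.closedBall 0 r := by
  obtain ⟨p, hpK, hp⟩ := exists_norm_eq_iInf_of_complete_convex hne hK hconv ξ
  have hobtuse := (norm_eq_iInf_iff_real_inner_le_zero hconv hpK).1 hp
  refine ⟨p, hpK, ξ - p, ?_, add_sub_cancel p ξ⟩
  rw [mem_closedBall_zero_iff]
  rcases eq_or_ne ξ p with rfl | hξp
  · simpa using hr
  have hnorm : 0 < ‖ξ - p‖ := norm_pos_iff.2 (sub_ne_zero.2 hξp)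
  set u := ‖ξ - p‖⁻¹ • (ξ - p)
  obtain ⟨η, hηK, hη⟩ := h u (norm_smul_inv_norm (sub_ne_zero.2 hξp))
  have hpη : 0 ≤ ⟪p - η, u⟫ := by
    rw [real_inner_smul_right, ← neg_sub η p, inner_neg_left, real_inner_comm]
    exact mul_nonneg (inv_nonneg.2 hnorm.le) (neg_nonneg.2 (hobtuse η hηK))
  calc ‖ξ - p‖ = ⟪ξ - p, u⟫ := by
        rw [real_inner_smul_right, real_inner_self_eq_norm_mul_norm, ← mul_assoc,
          inv_mul_mul_self]
    _ ≤ ⟪ξ - p, u⟫ + ⟪p - η, u⟫ := le_add_of_nonneg_right hpη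
    _ = ⟪ξ - η, u⟫ := by rw [← inner_add_left, sub_add_sub_cancel]
    _ ≤ r := hη

section Subdifferential

variable {n : ℕ} {f : EuclideanSpace ℝ (Fin n) → ℝ}

theorem subdiff_nonempty (hf : ConvexOn ℝ univ f) (hcont : Continuous f)
    (z : EuclideanSpace ℝ (Fin n)) : (subdiff f z).Nonempty := by
  obtain ⟨g, hg⟩ := hf.exists_strongDual_add_le hcont z
  refine ⟨(InnerProductSpace.toDual ℝ _).symm g, fun y => ?_⟩
  rw [InnerProductSpace.toDual_symm_apply]
  exact hg y

theorem norm_le_of_mem_subdiff {z ξ : EuclideanSpace ℝ (Fin n)} {C : ℝ}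
    (hξ : ξ ∈ subdiff f z) (hC : ∀ y ∈ Metric.closedBall z 1, |f y| ≤ C) : ‖ξ‖ ≤ 2 * C := by
  -- Thanks to `0⁻¹ = 0`, the test vector `v` needs no case split on `ξ = 0`.
  set v := ‖ξ‖⁻¹ • ξ
  have hv : ‖v‖ ≤ 1 := by
    rw [norm_smul, norm_inv, norm_norm]
    exact inv_mul_le_one_of_le₀ le_rfl (norm_nonneg ξ)
  have hinner : ⟪ξ, v⟫ = ‖ξ‖ := by
    rw [real_inner_smul_right, real_inner_self_eq_norm_mul_norm, ← mul_assoc, inv_mul_mul_self]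
  have hgrowth := hξ (z + v)
  rw [add_sub_cancel_left, hinner] at hgrowth
  have hz := abs_le.1 (hC z (Metric.mem_closedBall_self zero_le_one))
  have hzv := abs_le.1 (hC (z + v) (by simpa [dist_eq_norm] using hv))
  linarith

theorem inner_sub_le_of_mem_epsSubdiff_of_mem_subdiff {x v ξ η : EuclideanSpace ℝ (Fin n)}
    {ε : ℝ} (hξ : ξ ∈ epsSubdiff f ε x) (hη : η ∈ subdiff f (x + v)) : ⟪ξ - η, v⟫ ≤ ε := by
  have hξv := hξ (x + v)
  have hηx := hη x
  rw [add_sub_cancel_left] at hξv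
  rw [sub_add_cancel_left, inner_neg_right] at hηx
  rw [inner_sub_left]
  linarith

theorem isCompact_setOf_mem_subdiff_sphere (hcont : Continuous f)
    (x : EuclideanSpace ℝ (Fin n)) (t : ℝ) :
    IsCompact {ξ | ∃ d : EuclideanSpace ℝ (Fin n), ‖d‖ = 1 ∧ ξ ∈ subdiff f (x + t • d)} := by
  obtain ⟨C, hC⟩ := (isCompact_closedBall x (|t| + 1)).exists_bound_of_continuousOn
    hcont.continuousOn
  set T := {p : EuclideanSpace ℝ (Fin n) × EuclideanSpace ℝ (Fin n) |
    ‖p.1‖ = 1 ∧ p.2 ∈ subdiff f (x + t • p.1)}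
  have hT_closed : IsClosed T := by
    have hT_eq : T = {p | ‖p.1‖ = 1} ∩
        ⋂ y, {p | f (x + t • p.1) + ⟪p.2, y - (x + t • p.1)⟫ ≤ f y} := by
      ext p
      simp only [T, subdiff, mem_inter_iff, mem_iInter, mem_ofPred_eq, ge_iff_le]
    rw [hT_eq]
    exact (isClosed_eq (by fun_prop) continuous_const).inter
      (isClosed_iInter fun y => isClosed_le (by fun_prop) continuous_const)
  have hT_sub : T ⊆ Metric.sphere 0 1 ×ˢ Metric.closedBall 0 (2 * C) := by
    rintro ⟨d, ξ⟩ ⟨hd, hξ⟩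
    have hball : Metric.closedBall (x + t • d) 1 ⊆ Metric.closedBall x (|t| + 1) :=
      Metric.closedBall_subset_closedBall' (by simp [dist_eq_norm, norm_smul, hd, add_comm])
    exact ⟨mem_sphere_zero_iff_norm.2 hd, mem_closedBall_zero_iff.2 (norm_le_of_mem_subdiff hξ
      fun y hy => by simpa only [Real.norm_eq_abs] using hC y (hball hy))⟩
  have hT : IsCompact T :=
    ((isCompact_sphere 0 1).prod (isCompact_closedBall 0 (2 * C))).of_isClosed_subset
      hT_closed hT_sub
  convert hT.image continuous_snd
  ext ξ
  simp [T]

end Subdifferential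

theorem eps_subdiff_subset_sphSubdiff_add_ball {n : ℕ} (hn : 1 ≤ n)
    (f : EuclideanSpace ℝ (Fin n) → ℝ) (hf : ConvexOn ℝ Set.univ f)
    (x : EuclideanSpace ℝ (Fin n)) (t : ℝ) (ht : 0 < t) (ε : ℝ) (hε : 0 ≤ ε) :
    epsSubdiff f ε x ⊆
      sphSubdiff f t x + Metric.closedBall (0 : EuclideanSpace ℝ (Fin n)) (ε / t) := by
  have : Nonempty (Fin n) := ⟨⟨0, hn⟩⟩
  have hcont : Continuous f := continuousOn_univ.1 (hf.continuousOn isOpen_univ)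
  have hmem (u : EuclideanSpace ℝ (Fin n)) (hu : ‖u‖ = 1) :
      ∃ η ∈ sphSubdiff f t x, η ∈ subdiff f (x + t • u) :=
    (subdiff_nonempty hf hcont _).imp fun η hη => ⟨subset_convexHull ℝ _ ⟨u, hu, hη⟩, hη⟩
  obtain ⟨u₀, hu₀⟩ :=
    (NormedSpace.sphere_nonempty (x := (0 : EuclideanSpace ℝ (Fin n)))).2 zero_le_one
  intro ξ hξ
  refine mem_add_closedBall_of_forall_exists_inner_le ?_
    (isCompact_setOf_mem_subdiff_sphere hcont x t).convexHull.isComplete (convex_convexHull ℝ _)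
    (div_nonneg hε ht.le) fun u hu => ?_
  · exact (hmem u₀ (mem_sphere_zero_iff_norm.1 hu₀)).imp fun η hη => hη.1
  · obtain ⟨η, hηK, hη⟩ := hmem u hu
    refine ⟨η, hηK, ?_⟩
    rw [le_div_iff₀ ht, mul_comm, ← real_inner_smul_right]
    exact inner_sub_le_of_mem_epsSubdiff_of_mem_subdiff hξ hη
end
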